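/- arXiv:2505.00129 — 2 statements merged into one kernel-verified Lean document; each statement's English description precedes it below -/
import Mathlib

section
/- Let F be a simplicial function space admitting simplicial extension operators E_m : F̊(T^m) → F(Q^{m+1}) for all m < n, where T^m = {λ ∈ ℝ^{m+1} : λ_i ≥ 0, Σλ_i = 1} and Q^{m+1} = {λ : λ_i ≥ 0, Σλ_i ≤ 1}, such that tr^{Q^{m+1}}_{T^m} E_m is the inclusion and tr^{Q^{m+1}}_S E_m = 0 for every proper face S of Q^{m+1} other than T^m. Then for every simplicial complex 𝒯 of dimension at most n, its face poset 𝔗 admits local extension operators E^𝒯_K : F̊(K) → F(𝒯) for every face K. -/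
open CategoryTheory Opposite

-- A simplicial function space: a contravariant functor from (vertex sets of) simplices
-- with simplicial maps — equivalently, finite sets with arbitrary maps — to real vector
-- spaces.  A simplicial map between simplices is the affine map determined by an
-- arbitrary map of vertex sets.
variable (𝓕 : FintypeCatᵒᵖ ⥤ ModuleCat ℝ)

-- The ambient vertex set of the simplicial complex.
variable {Vt : Type} [DecidableEq Vt]

/-- The inclusion of the vertex set of a subface. -/
def inclF {G F : Finset Vt} (h : G ⊆ F) :
    FintypeCat.of (↥G) ⟶ FintypeCat.of (↥F) :=
  FintypeCat.homMk (fun (x : ↥G) => ⟨x.1, h x.2⟩)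

/-- The value of the simplicial function space on (the simplex with) a vertex set. -/
abbrev Fobj (α : Type) [Fintype α] := 𝓕.obj (op (FintypeCat.of α))

/-- The trace (restriction) map to a subface. -/
def trF {G F : Finset Vt} (h : G ⊆ F) : Fobj 𝓕 ↥F →ₗ[ℝ] Fobj 𝓕 ↥G :=
  (𝓕.map (inclF h).op).hom

/-- The inclusion of a face of a simplex, as a map of vertex sets. -/
def inclA {α : Type} [Fintype α] (S : Finset α) :
    FintypeCat.of (↥S) ⟶ FintypeCat.of α :=
  FintypeCat.homMk (fun (x : ↥S) => x.1)

/-- The vanishing-trace subspace: elements whose trace to every proper (nonempty)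
face vanishes. -/
def vanishA (α : Type) [Fintype α] [DecidableEq α] : Submodule ℝ (Fobj 𝓕 α) where
  carrier := {φ | ∀ S : Finset α, S.Nonempty → S ≠ Finset.univ →
    𝓕.map (inclA S).op φ = 0}
  add_mem' := by intro a b ha hb S h1 h2; simp [map_add, ha S h1 h2, hb S h1 h2]
  zero_mem' := by intro S h1 h2; simp
  smul_mem' := by intro c a ha S h1 h2; simp [map_smul, ha S h1 h2]

/-- The global function space of a simplicial complex with face set `faces`,
as an inverse limit over the face poset. -/
def GlobC (faces : Set (Finset Vt)) :
    Submodule ℝ (∀ F : faces, Fobj 𝓕 ↥F.1) where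
  carrier := {φ | ∀ (G F : faces) (h : G.1 ⊆ F.1), trF 𝓕 h (φ F) = φ G}
  add_mem' := by intro a b ha hb G F h; simp [map_add, ha G F h, hb G F h]
  zero_mem' := by intro G F h; simp
  smul_mem' := by intro c a ha G F h; simp [map_smul, ha G F h]

-- The standard m-simplex T^m has vertex set Fin (m+1); the standard (m+1)-simplex
-- Q^(m+1) has vertex set Fin (m+2), with T^m included as the face missing the last
-- vertex (the origin).
def castMap (m : ℕ) : FintypeCat.of (Fin (m + 1)) ⟶ FintypeCat.of (Fin (m + 2)) :=
  FintypeCat.homMk Fin.castSucc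

-- T^m as a face (vertex subset) of Q^(m+1).
def Tface (m : ℕ) : Finset (Fin (m + 2)) :=
  (Finset.univ : Finset (Fin (m + 1))).image Fin.castSucc

/-! For a face `K` with `m + 1 ≤ n` vertices, identify `K` with `T^m`, extend by `E_m` to
`Q^(m+1)` and pull back to every face `F` along `Φ^𝒯_K`, which sends the vertices of `K` to
those of `T^m` and every other vertex to the origin; functoriality makes these pullbacks
compatible. On `K` this returns `ψ`. A face `F` missing a vertex `v` of `K` is mapped into the
face of `Q^(m+1)` opposite `v`, which is neither `T^m` nor everything, so the trace there is
zero. A face with `n + 1` vertices is maximal, and there `ψ` extends by its own traces on the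
subfaces of `K` and by zero elsewhere: compatibility is exactly the vanishing of the traces of
`ψ` on proper faces. -/

def HasLocalExtensionOperator (faces : Set (Finset Vt)) (K : faces) : Prop :=
  ∃ Eloc : vanishA 𝓕 ↥K.1 →ₗ[ℝ] GlobC 𝓕 faces,
    (∀ ψ : vanishA 𝓕 ↥K.1,
      ((Eloc ψ : ∀ F : faces, Fobj 𝓕 ↥F.1) K) = (ψ : Fobj 𝓕 ↥K.1)) ∧
    (∀ (F : faces), ¬ K.1 ⊆ F.1 → ∀ ψ : vanishA 𝓕 ↥K.1,
      ((Eloc ψ : ∀ F : faces, Fobj 𝓕 ↥F.1) F) = 0)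

section

variable {𝓕}

lemma map_map_apply {A B C : FintypeCat} (f : A ⟶ B) (g : B ⟶ C) (φ : 𝓕.obj (op C)) :
    𝓕.map f.op (𝓕.map g.op φ) = 𝓕.map (f ≫ g).op φ := by
  rw [op_comp, 𝓕.map_comp]; rfl

lemma map_eq_self_of_forall_eq {A : FintypeCat} (f : A ⟶ A) (hf : ∀ a, f a = a)
    (φ : 𝓕.obj (op A)) : 𝓕.map f.op φ = φ := by
  rw [FintypeCat.hom_ext f (𝟙 A) hf, op_id, 𝓕.map_id]; rfl

lemma trF_trF {V : Type} {H G F : Finset V} (h₁ : H ⊆ G) (h₂ : G ⊆ F) (φ : Fobj 𝓕 ↥F) :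
    trF 𝓕 h₁ (trF 𝓕 h₂ φ) = trF 𝓕 (h₁.trans h₂) φ :=
  map_map_apply _ _ _

lemma trF_self {V : Type} {F : Finset V} (φ : Fobj 𝓕 ↥F) : trF 𝓕 (subset_refl F) φ = φ :=
  map_eq_self_of_forall_eq _ (fun _ => rfl) _

lemma map_eq_zero_of_forall_mem {α β : Type} [Fintype α] [Fintype β]
    (f : FintypeCat.of α ⟶ FintypeCat.of β) (S : Finset β) (hf : ∀ a, f a ∈ S)
    {φ : Fobj 𝓕 β} (hφ : 𝓕.map (inclA S).op φ = 0) : 𝓕.map f.op φ = 0 := by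
  have hfac : f = FintypeCat.homMk (fun a => (⟨f a, hf a⟩ : ↥S)) ≫ inclA S := rfl
  rw [hfac, ← map_map_apply, hφ, map_zero]

lemma map_eq_zero_of_not_surjective {α β : Type} [Fintype α] [Nonempty α] [Fintype β]
    [DecidableEq β] (f : FintypeCat.of α ⟶ FintypeCat.of β) (hf : ¬ Function.Surjective f)
    {φ : Fobj 𝓕 β} (hφ : φ ∈ vanishA 𝓕 β) : 𝓕.map f.op φ = 0 := by
  refine map_eq_zero_of_forall_mem f (Finset.univ.image f) (fun a => by simp) (hφ _ ?_ ?_)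
  · exact Finset.univ_nonempty.image _
  · intro huniv
    exact hf fun b => by simpa using huniv.ge (Finset.mem_univ b)

lemma trF_eq_zero_of_ssubset {G K : Finset Vt} (hG : G.Nonempty) (hGK : G ⊂ K)
    {ψ : Fobj 𝓕 ↥K} (hψ : ψ ∈ vanishA 𝓕 ↥K) : trF 𝓕 hGK.subset ψ = 0 := by
  have : Nonempty ↥G := hG.to_subtype
  refine map_eq_zero_of_not_surjective _ (fun hsurj => ?_) hψ
  obtain ⟨v, hvK, hvG⟩ := Finset.exists_of_ssubset hGK
  obtain ⟨w, hw⟩ := hsurj ⟨v, hvK⟩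
  have hwv : (w : Vt) = v := congrArg Subtype.val hw
  exact hvG (hwv ▸ w.2)

def vanishA.comap {α β : Type} [Fintype α] [DecidableEq α] [Fintype β] [DecidableEq β]
    (e : α ≃ β) : vanishA 𝓕 β →ₗ[ℝ] vanishA 𝓕 α :=
  LinearMap.codRestrict _ ((𝓕.map (FintypeCat.homMk e).op).hom ∘ₗ (vanishA 𝓕 β).subtype)
    fun ψ S hS hSu => by
      have : Nonempty ↥S := hS.to_subtype
      refine (map_map_apply _ _ _).trans (map_eq_zero_of_not_surjective _ ?_ ψ.2)
      obtain ⟨a, ha⟩ := not_forall.mp (mt Finset.eq_univ_iff_forall.mpr hSu)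
      intro hsurj
      obtain ⟨s, hs⟩ := hsurj (e a)
      exact ha (e.injective hs ▸ s.2)

lemma hasLocalExtensionOperator_of_compatible {faces : Set (Finset Vt)} {K : faces}
    (L : ∀ F : faces, vanishA 𝓕 ↥K.1 →ₗ[ℝ] Fobj 𝓕 ↥F.1)
    (hL : ∀ (G F : faces) (h : G.1 ⊆ F.1) ψ, trF 𝓕 h (L F ψ) = L G ψ)
    (hK : ∀ ψ, L K ψ = ψ) (hzero : ∀ F : faces, ¬ K.1 ⊆ F.1 → ∀ ψ, L F ψ = 0) :
    HasLocalExtensionOperator 𝓕 faces K :=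
  ⟨LinearMap.codRestrict _ (LinearMap.pi L) fun ψ G F h => hL G F h ψ, hK, hzero⟩

/-- The map `Φ^𝒯_K` on the face `F`: a vertex of `K` goes to its vertex of `T^m`, every other
vertex to the origin of `Q^(m+1)`. -/
def phiMap {K : Finset Vt} {m : ℕ} (e : ↥K ≃ Fin (m + 1)) (F : Finset Vt) :
    FintypeCat.of ↥F ⟶ FintypeCat.of (Fin (m + 2)) :=
  FintypeCat.homMk fun v => if h : v.1 ∈ K then (e ⟨v.1, h⟩).castSucc else Fin.last (m + 1)

lemma inclF_comp_phiMap {K : Finset Vt} {m : ℕ} (e : ↥K ≃ Fin (m + 1)) {G F : Finset Vt}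
    (h : G ⊆ F) : inclF h ≫ phiMap e F = phiMap e G :=
  rfl

lemma phiMap_self {K : Finset Vt} {m : ℕ} (e : ↥K ≃ Fin (m + 1)) :
    phiMap e K = FintypeCat.homMk e ≫ castMap m :=
  FintypeCat.hom_ext _ _ fun v => dif_pos v.2

lemma phiMap_ne_of_notMem {K : Finset Vt} {m : ℕ} (e : ↥K ≃ Fin (m + 1)) {F : Finset Vt}
    {v : Vt} (hvK : v ∈ K) (hvF : v ∉ F) (a : ↥F) :
    phiMap e F a ≠ (e ⟨v, hvK⟩).castSucc := by
  change (if h : a.1 ∈ K then (e ⟨a.1, h⟩).castSucc else Fin.last (m + 1)) ≠ _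
  split_ifs with haK
  · intro hEq
    have hav : a.1 = v := congrArg Subtype.val (e.injective (Fin.castSucc_injective _ hEq))
    exact hvF (hav ▸ a.2)
  · exact (Fin.castSucc_lt_last _).ne'

lemma hasLocalExtensionOperator_of_simplicialExtension (faces : Set (Finset Vt)) (K : faces)
    {m : ℕ} (hK : K.1.card = m + 1)
    (E : vanishA 𝓕 (Fin (m + 1)) →ₗ[ℝ] Fobj 𝓕 (Fin (m + 2)))
    (hE1 : ∀ ψ : vanishA 𝓕 (Fin (m + 1)),
      𝓕.map (castMap m).op (E ψ) = (ψ : Fobj 𝓕 (Fin (m + 1))))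
    (hE2 : ∀ S : Finset (Fin (m + 2)), S.Nonempty → S ≠ Finset.univ → S ≠ Tface m →
      ∀ ψ : vanishA 𝓕 (Fin (m + 1)), 𝓕.map (inclA S).op (E ψ) = 0) :
    HasLocalExtensionOperator 𝓕 faces K := by
  let e : ↥K.1 ≃ Fin (m + 1) := K.1.equivFin.trans (finCongr hK)
  let ext := E ∘ₗ vanishA.comap e.symm
  refine hasLocalExtensionOperator_of_compatible
    (fun F => (𝓕.map (phiMap e F.1).op).hom ∘ₗ ext) (fun G F h ψ => ?_) (fun ψ => ?_)
    (fun F hKF ψ => ?_)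
  · exact (map_map_apply _ _ _).trans (by rw [inclF_comp_phiMap]; rfl)
  · change 𝓕.map (phiMap e K.1).op (E _) = _
    rw [phiMap_self, ← map_map_apply, hE1]
    exact (map_map_apply _ _ _).trans (map_eq_self_of_forall_eq _ e.symm_apply_apply _)
  · obtain ⟨v, hvK, hvF⟩ := Finset.not_subset.mp hKF
    let c : Fin (m + 2) := (e ⟨v, hvK⟩).castSucc
    refine map_eq_zero_of_forall_mem _ (Finset.univ.erase c)
      (fun a => Finset.mem_erase.mpr ⟨phiMap_ne_of_notMem e hvK hvF a, Finset.mem_univ _⟩)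
      (hE2 _ ⟨Fin.last (m + 1), ?_⟩ ?_ ?_ _)
    · exact Finset.mem_erase.mpr ⟨(Fin.castSucc_lt_last _).ne', Finset.mem_univ _⟩
    · exact fun h => Finset.notMem_erase c _ (h ▸ Finset.mem_univ c)
    · intro h
      have hcT : c ∈ Tface m := Finset.mem_image_of_mem _ (Finset.mem_univ _)
      exact Finset.notMem_erase c _ (h ▸ hcT)

lemma hasLocalExtensionOperator_of_maximal {faces : Set (Finset Vt)}
    (hnonempty : ∀ F ∈ faces, F.Nonempty) (K : faces)
    (hmax : ∀ F ∈ faces, K.1 ⊆ F → F = K.1) : HasLocalExtensionOperator 𝓕 faces K := by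
  have htr_zero : ∀ (G : faces) (hGK : G.1 ⊆ K.1), G ≠ K →
      ∀ ψ : vanishA 𝓕 ↥K.1, trF 𝓕 hGK ψ = 0 := fun G hGK hG ψ =>
    trF_eq_zero_of_ssubset (hnonempty G.1 G.2)
      (hGK.ssubset_of_ne fun h => hG (Subtype.ext h)) ψ.2
  refine hasLocalExtensionOperator_of_compatible
    (fun F => if h : F.1 ⊆ K.1 then trF 𝓕 h ∘ₗ (vanishA 𝓕 ↥K.1).subtype else 0)
    (fun G F h ψ => ?_) (fun ψ => ?_) (fun F hKF ψ => ?_)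
  · by_cases hF : F.1 ⊆ K.1
    · simp only [dif_pos hF, dif_pos (h.trans hF), LinearMap.comp_apply, trF_trF]
    · simp only [dif_neg hF, LinearMap.zero_apply, map_zero]
      split_ifs with hG
      · refine (htr_zero G hG (fun hGK => hF ?_) ψ).symm
        exact (hmax F.1 F.2 (hGK ▸ h)).le
      · rfl
  · simp only [dif_pos (subset_refl K.1), LinearMap.comp_apply]
    exact trF_self _
  · split_ifs with hF
    · exact htr_zero F hF (fun h => hKF (h ▸ subset_refl _)) ψ
    · rfl

end

theorem simplicial_extension_operators_yield_local_extension_operators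
    (n : ℕ)
    (Em : ∀ m, m < n → (vanishA 𝓕 (Fin (m + 1)) →ₗ[ℝ] Fobj 𝓕 (Fin (m + 2))))
    (hEm1 : ∀ (m) (h : m < n) (ψ : vanishA 𝓕 (Fin (m + 1))),
      𝓕.map (castMap m).op (Em m h ψ) = (ψ : Fobj 𝓕 (Fin (m + 1))))
    (hEm2 : ∀ (m) (h : m < n) (S : Finset (Fin (m + 2))),
      S.Nonempty → S ≠ Finset.univ → S ≠ Tface m →
      ∀ ψ : vanishA 𝓕 (Fin (m + 1)), 𝓕.map (inclA S).op (Em m h ψ) = 0)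
    (faces : Set (Finset Vt))
    (hnonempty : ∀ F ∈ faces, F.Nonempty)
    (hdim : ∀ F ∈ faces, F.card ≤ n + 1) :
    ∀ K : faces, ∃ Eloc : vanishA 𝓕 ↥K.1 →ₗ[ℝ] GlobC 𝓕 faces,
      (∀ ψ : vanishA 𝓕 ↥K.1,
        ((Eloc ψ : ∀ F : faces, Fobj 𝓕 ↥F.1) K) = (ψ : Fobj 𝓕 ↥K.1)) ∧
      (∀ (F : faces), ¬ K.1 ⊆ F.1 → ∀ ψ : vanishA 𝓕 ↥K.1,
        ((Eloc ψ : ∀ F : faces, Fobj 𝓕 ↥F.1) F) = 0) := by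
  intro K
  obtain ⟨m, hm⟩ : ∃ m, K.1.card = m + 1 :=
    Nat.exists_eq_add_one.mpr (Finset.card_pos.mpr (hnonempty K.1 K.2))
  by_cases hmn : m < n
  · exact hasLocalExtensionOperator_of_simplicialExtension faces K hm (Em m hmn)
      (hEm1 m hmn) (hEm2 m hmn)
  · refine hasLocalExtensionOperator_of_maximal hnonempty K fun F hF hKF => ?_
    exact (Finset.eq_of_subset_of_card_le hKF (by have := hdim F hF; omega)).symm
end

section
/- For the space P_0Λ^k of constant-coefficient differential k-forms, there is no simplicial extension operator in dimension k: there is no linear map E_k : P̊_0Λ^k(T^k) → P_0Λ^k(Q^{k+1}) whose trace to T^k is the inclusion and whose trace to every other proper face of Q^{k+1} is zero. Concretely: if α = Σ_{i=0}^k a_i (−1)^i dλ_0∧…∧d̂λ_i∧…∧dλ_k is a constant k-form on Q^{k+1} ⊂ ℝ^{k+1} whose pullback to each face Q_i = {λ ∈ Q^{k+1} : λ_i = 0} vanishes, then α = 0, hence its pullback to T^k is also zero rather than the volume form. -/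
open Finset

-- The linear inclusion of the (affine span of the) face Q_i = {λ ∈ Q^(k+1) : λ_i = 0}
-- of Q^(k+1) ⊆ ℝ^(k+1): insert a zero as the i-th coordinate.
def faceIncl (k : ℕ) (i : Fin (k + 1)) : (Fin k → ℝ) →ₗ[ℝ] (Fin (k + 1) → ℝ) where
  toFun x := i.insertNth 0 x
  map_add' a b := by
    funext j
    refine Fin.succAboveCases i ?_ ?_ j <;> simp
  map_smul' c a := by
    funext j
    refine Fin.succAboveCases i ?_ ?_ j <;> simp

-- A linear parametrization of the direction of the face T^k = {λ : Σ λ_i = 1}: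
-- the image of this map is the hyperplane {λ : Σ λ_i = 0} parallel to T^k.
def TIncl (k : ℕ) : (Fin k → ℝ) →ₗ[ℝ] (Fin (k + 1) → ℝ) where
  toFun x := Fin.cons (-(∑ j, x j)) x
  map_add' a b := by
    funext j
    refine Fin.cases ?_ ?_ j <;> simp [Finset.sum_add_distrib] <;> ring
  map_smul' c a := by
    funext j
    refine Fin.cases ?_ ?_ j <;> simp [Finset.mul_sum]

/-! A constant `k`-form on `ℝ^(k+1)` is determined by its values on `k`-tuples of standard
basis vectors. Such a tuple misses some coordinate `i`, so it lies in the face `Q_i`, where the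
form vanishes by assumption. -/

theorem Fin.exists_succAbove_comp_eq {k : ℕ} (v : Fin k → Fin (k + 1)) :
    ∃ (i : Fin (k + 1)) (w : Fin k → Fin k), i.succAbove ∘ w = v := by
  obtain ⟨i, hi⟩ : ∃ i, ∀ j, v j ≠ i := by
    by_contra! h
    simpa using Fintype.card_le_of_surjective v h
  choose w hw using fun j => Fin.exists_succAbove_eq (hi j)
  exact ⟨i, w, funext hw⟩

theorem faceIncl_single (k : ℕ) (i : Fin (k + 1)) (m : Fin k) :
    faceIncl k i (Pi.single m 1) = Pi.single (i.succAbove m) 1 := by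
  funext j
  refine Fin.succAboveCases i ?_ ?_ j
  · simp [faceIncl]
  · intro l
    simp [faceIncl, Pi.single_apply, (Fin.succAbove_right_injective (p := i)).eq_iff]

theorem AlternatingMap.eq_zero_of_forall_compLinearMap_faceIncl_eq_zero {M : Type*}
    [AddCommGroup M] [Module ℝ M] {k : ℕ} (α : (Fin (k + 1) → ℝ) [⋀^Fin k]→ₗ[ℝ] M)
    (hα : ∀ i, α.compLinearMap (faceIncl k i) = 0) : α = 0 := by
  refine Module.Basis.ext_alternating (Pi.basisFun ℝ (Fin (k + 1))) fun v _ => ?_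
  obtain ⟨i, w, rfl⟩ := Fin.exists_succAbove_comp_eq v
  have h_face : (α fun j => Pi.basisFun ℝ _ (i.succAbove (w j))) =
      α.compLinearMap (faceIncl k i) fun j => Pi.single (w j) 1 := by
    simp only [AlternatingMap.compLinearMap_apply, faceIncl_single, Pi.basisFun_apply]
  rw [Function.comp_def, h_face, hα i, AlternatingMap.zero_apply, AlternatingMap.zero_apply]

/-- There is no simplicial extension operator for P₀Λ^k in dimension k: any
constant-coefficient k-form α on ℝ^(k+1) whose pullback to (the affine span of) each
face Q_i of Q^(k+1) vanishes is itself zero; in particular its pullback to (the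
direction of) the face T^k is zero rather than the volume form, so no constant k-form
on Q^(k+1) can have trace zero on every Q_i while having nonzero trace on T^k. -/
theorem no_simplicial_extension_for_constant_forms (k : ℕ) :
    (∀ α : AlternatingMap ℝ (Fin (k + 1) → ℝ) ℝ (Fin k),
      (∀ i : Fin (k + 1), α.compLinearMap (faceIncl k i) = 0) → α = 0) ∧
    ¬ ∃ α : AlternatingMap ℝ (Fin (k + 1) → ℝ) ℝ (Fin k),
        (∀ i : Fin (k + 1), α.compLinearMap (faceIncl k i) = 0) ∧
        α.compLinearMap (TIncl k) ≠ 0 := by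
  refine ⟨AlternatingMap.eq_zero_of_forall_compLinearMap_faceIncl_eq_zero, ?_⟩
  rintro ⟨α, hα, hT⟩
  rw [α.eq_zero_of_forall_compLinearMap_faceIncl_eq_zero hα] at hT
  exact hT (AlternatingMap.zero_compLinearMap _)
end
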